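/- Fisher combination of asymptotically independent test statistics: let (A_n) and (B_n) be sequences of real random variables (each pair (A_n, B_n) defined on a common probability space) and let G1, G2 : ℝ → [0,1] be continuous, strictly increasing cumulative distribution functions with G1(ℝ) and G2(ℝ) dense in (0,1). Suppose that for every x, y ∈ ℝ, P(A_n ≤ x, B_n ≤ y) → G1(x)·G2(y) as n → ∞. Define the p-values p_{A,n} = 1 − G1(A_n) and p_{B,n} = 1 − G2(B_n). Then −2(log p_{A,n} + log p_{B,n}) converges in distribution to the chi-squared distribution with 4 degrees of freedom. -/

import Mathlib

open MeasureTheory ProbabilityTheory Filter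
open scoped Topology

noncomputable section

/-- Cdf of the χ²₄ distribution (the Gamma distribution with shape 2 and rate 1/2):
`t ↦ 1 − e^{−t/2}(1 + t/2)` for `t > 0` and `0` otherwise. It is continuous on `ℝ`,
so every `t` is a continuity point. -/
def chisq4CDF (t : ℝ) : ℝ := if t ≤ 0 then 0 else 1 - Real.exp (-t / 2) * (1 + t / 2)

/-- **Fisher combination of asymptotically independent statistics.**
Let `(A_n)`, `(B_n)` be real random variables (each pair on a common probability space)
and let `G1, G2` be continuous, strictly increasing cdfs whose ranges are dense in
`(0,1)` (equivalently, with limits `0` at `−∞` and `1` at `+∞`). If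
`P(A_n ≤ x, B_n ≤ y) → G1(x)·G2(y)` for all `x, y`, then with p-values
`p_{A,n} = 1 − G1(A_n)` and `p_{B,n} = 1 − G2(B_n)`, the statistic
`−2(log p_{A,n} + log p_{B,n})` converges in distribution to χ²₄ (stated via
convergence of the cdfs, the limiting cdf being continuous everywhere). -/
theorem fisher_combination_of_asymptotically_independent
    (Ωs : ℕ → Type) [∀ n, MeasurableSpace (Ωs n)]
    (P : ∀ n, Measure (Ωs n)) (hP : ∀ n, IsProbabilityMeasure (P n))
    (A B : ∀ n, Ωs n → ℝ)
    (hA : ∀ n, Measurable (A n)) (hB : ∀ n, Measurable (B n))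
    (G1 G2 : ℝ → ℝ)
    (hG1c : Continuous G1) (hG1m : StrictMono G1)
    (hG1bot : Tendsto G1 atBot (𝓝 0)) (hG1top : Tendsto G1 atTop (𝓝 1))
    (hG2c : Continuous G2) (hG2m : StrictMono G2)
    (hG2bot : Tendsto G2 atBot (𝓝 0)) (hG2top : Tendsto G2 atTop (𝓝 1))
    (hjoint : ∀ x y : ℝ,
      Tendsto (fun n => ((P n) {ω | A n ω ≤ x ∧ B n ω ≤ y}).toReal)
        atTop (𝓝 (G1 x * G2 y))) :
    ∀ t : ℝ,
      Tendsto (fun n =>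
          ((P n) {ω | -2 * (Real.log (1 - G1 (A n ω)) + Real.log (1 - G2 (B n ω)))
              ≤ t}).toReal)
        atTop (𝓝 (chisq4CDF t)) := by
  -- G1 and G2 take values strictly inside (0,1)
  have hG1lt : ∀ z, G1 z < 1 := by
    intro z
    have h1 : G1 (z + 1) ≤ 1 :=
      ge_of_tendsto hG1top (by
        filter_upwards [eventually_ge_atTop (z + 1)] with w hw
        exact hG1m.monotone hw)
    exact lt_of_lt_of_le (hG1m (lt_add_one z)) h1
  have hG1pos : ∀ z, 0 < G1 z := by
    intro z
    have h1 : 0 ≤ G1 (z - 1) :=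
      le_of_tendsto hG1bot (by
        filter_upwards [eventually_le_atBot (z - 1)] with w hw
        exact hG1m.monotone hw)
    exact lt_of_le_of_lt h1 (hG1m (by linarith))
  have hG2lt : ∀ z, G2 z < 1 := by
    intro z
    have h1 : G2 (z + 1) ≤ 1 :=
      ge_of_tendsto hG2top (by
        filter_upwards [eventually_ge_atTop (z + 1)] with w hw
        exact hG2m.monotone hw)
    exact lt_of_lt_of_le (hG2m (lt_add_one z)) h1
  have hG2pos : ∀ z, 0 < G2 z := by
    intro z
    have h1 : 0 ≤ G2 (z - 1) :=
      le_of_tendsto hG2bot (by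
        filter_upwards [eventually_le_atBot (z - 1)] with w hw
        exact hG2m.monotone hw)
    exact lt_of_le_of_lt h1 (hG2m (by linarith))
  -- surjectivity onto (0,1)
  have hrange1 : ∀ u : ℝ, 0 < u → u < 1 → ∃ x, G1 x = u := by
    intro u hu0 hu1
    obtain ⟨x₀, hx₀⟩ := (hG1bot.eventually_lt_const hu0).exists
    obtain ⟨x₁, hx₁⟩ := (hG1top.eventually_const_lt hu1).exists
    have hx01 : x₀ ≤ x₁ := le_of_lt (hG1m.lt_iff_lt.mp (hx₀.trans hx₁))
    obtain ⟨x, _, hx⟩ := intermediate_value_Icc hx01 hG1c.continuousOn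
      ⟨le_of_lt hx₀, le_of_lt hx₁⟩
    exact ⟨x, hx⟩
  have hrange2 : ∀ u : ℝ, 0 < u → u < 1 → ∃ x, G2 x = u := by
    intro u hu0 hu1
    obtain ⟨x₀, hx₀⟩ := (hG2bot.eventually_lt_const hu0).exists
    obtain ⟨x₁, hx₁⟩ := (hG2top.eventually_const_lt hu1).exists
    have hx01 : x₀ ≤ x₁ := le_of_lt (hG2m.lt_iff_lt.mp (hx₀.trans hx₁))
    obtain ⟨x, _, hx⟩ := intermediate_value_Icc hx01 hG2c.continuousOn
      ⟨le_of_lt hx₀, le_of_lt hx₁⟩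
    exact ⟨x, hx⟩
  -- abbreviations
  set X : ∀ n, Ωs n → ℝ := fun n ω => 1 - G1 (A n ω) with hXdef
  set Y : ∀ n, Ωs n → ℝ := fun n ω => 1 - G2 (B n ω) with hYdef
  have hX0 : ∀ n ω, 0 < X n ω := fun n ω => by
    simp only [hXdef]; linarith [hG1lt (A n ω)]
  have hX1 : ∀ n ω, X n ω < 1 := fun n ω => by
    simp only [hXdef]; linarith [hG1pos (A n ω)]
  have hY0 : ∀ n ω, 0 < Y n ω := fun n ω => by
    simp only [hYdef]; linarith [hG2lt (B n ω)]
  have hY1 : ∀ n ω, Y n ω < 1 := fun n ω => by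
    simp only [hYdef]; linarith [hG2pos (B n ω)]
  have hmX : ∀ n, Measurable (X n) := fun n =>
    measurable_const.sub (hG1c.measurable.comp (hA n))
  have hmY : ∀ n, Measurable (Y n) := fun n =>
    measurable_const.sub (hG2c.measurable.comp (hB n))
  -- quadrant convergence
  have hquad : ∀ a b : ℝ, 0 < a → a ≤ 1 → 0 < b → b ≤ 1 →
      Tendsto (fun n => ((P n) {ω | a ≤ X n ω ∧ b ≤ Y n ω}).toReal)
        atTop (𝓝 ((1 - a) * (1 - b))) := by
    intro a b ha0 ha1 hb0 hb1
    rcases eq_or_lt_of_le ha1 with ha | ha1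
    · have hz : (1 - a) * (1 - b) = 0 := by rw [ha]; ring
      rw [hz]
      have he : (fun n => ((P n) {ω | a ≤ X n ω ∧ b ≤ Y n ω}).toReal) = fun _ => 0 := by
        funext n
        have : {ω | a ≤ X n ω ∧ b ≤ Y n ω} = (∅ : Set (Ωs n)) := by
          ext ω
          simp only [Set.mem_setOf_eq, Set.mem_empty_iff_false, iff_false, not_and]
          intro h
          exact absurd (ha ▸ h) (not_le.mpr (hX1 n ω))
        rw [this]; simp
      rw [he]; exact tendsto_const_nhds
    · rcases eq_or_lt_of_le hb1 with hb | hb1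
      · have hz : (1 - a) * (1 - b) = 0 := by rw [hb]; ring
        rw [hz]
        have he : (fun n => ((P n) {ω | a ≤ X n ω ∧ b ≤ Y n ω}).toReal) = fun _ => 0 := by
          funext n
          have : {ω | a ≤ X n ω ∧ b ≤ Y n ω} = (∅ : Set (Ωs n)) := by
            ext ω
            simp only [Set.mem_setOf_eq, Set.mem_empty_iff_false, iff_false, not_and]
            intro _ h
            exact absurd (hb ▸ h) (not_le.mpr (hY1 n ω))
          rw [this]; simp
        rw [he]; exact tendsto_const_nhds
      · obtain ⟨x, hx⟩ := hrange1 (1 - a) (by linarith) (by linarith)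
        obtain ⟨y, hy⟩ := hrange2 (1 - b) (by linarith) (by linarith)
        have he : ∀ n, {ω | a ≤ X n ω ∧ b ≤ Y n ω} = {ω | A n ω ≤ x ∧ B n ω ≤ y} := by
          intro n; ext ω
          simp only [Set.mem_setOf_eq, hXdef, hYdef]
          constructor
          · rintro ⟨h1, h2⟩
            exact ⟨hG1m.le_iff_le.mp (by rw [hx]; linarith),
                   hG2m.le_iff_le.mp (by rw [hy]; linarith)⟩
          · rintro ⟨h1, h2⟩
            have := hG1m.monotone h1
            have := hG2m.monotone h2
            constructor <;> [rw [hx] at *; rw [hy] at *] <;> linarith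
        have hval : (1 - a) * (1 - b) = G1 x * G2 y := by rw [hx, hy]
        rw [hval]
        refine Tendsto.congr (fun n => ?_) (hjoint x y)
        rw [he n]
  -- strip convergence
  have hstrip : ∀ a a' b : ℝ, 0 < a → a ≤ a' → a' ≤ 1 → 0 < b → b ≤ 1 →
      Tendsto (fun n => ((P n) {ω | (a ≤ X n ω ∧ X n ω < a') ∧ b ≤ Y n ω}).toReal)
        atTop (𝓝 ((a' - a) * (1 - b))) := by
    intro a a' b ha0 haa ha1 hb0 hb1
    have ha'0 : 0 < a' := lt_of_lt_of_le ha0 haa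
    have key : ∀ n, ((P n) {ω | (a ≤ X n ω ∧ X n ω < a') ∧ b ≤ Y n ω}).toReal
        = ((P n) {ω | a ≤ X n ω ∧ b ≤ Y n ω}).toReal
          - ((P n) {ω | a' ≤ X n ω ∧ b ≤ Y n ω}).toReal := by
      intro n
      haveI := hP n
      have hsplit : {ω | a ≤ X n ω ∧ b ≤ Y n ω}
          = {ω | (a ≤ X n ω ∧ X n ω < a') ∧ b ≤ Y n ω} ∪ {ω | a' ≤ X n ω ∧ b ≤ Y n ω} := by
        ext ω
        simp only [Set.mem_setOf_eq, Set.mem_union]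
        constructor
        · rintro ⟨h1, h2⟩
          rcases lt_or_ge (X n ω) a' with h | h
          · exact Or.inl ⟨⟨h1, h⟩, h2⟩
          · exact Or.inr ⟨h, h2⟩
        · rintro (⟨⟨h1, _⟩, h2⟩ | ⟨h1, h2⟩)
          · exact ⟨h1, h2⟩
          · exact ⟨le_trans haa h1, h2⟩
      have hdisj : Disjoint {ω | (a ≤ X n ω ∧ X n ω < a') ∧ b ≤ Y n ω}
          {ω | a' ≤ X n ω ∧ b ≤ Y n ω} := by
        rw [Set.disjoint_left]
        rintro ω ⟨⟨_, h2⟩, _⟩ ⟨h3, _⟩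
        exact absurd h3 (not_le.mpr h2)
      have hm2 : MeasurableSet {ω | a' ≤ X n ω ∧ b ≤ Y n ω} :=
        (measurableSet_le measurable_const (hmX n)).inter
          (measurableSet_le measurable_const (hmY n))
      rw [hsplit, measure_union hdisj hm2,
        ENNReal.toReal_add (measure_ne_top _ _) (measure_ne_top _ _)]
      ring
    have := (hquad a b ha0 (le_trans haa ha1) hb0 hb1).sub (hquad a' b ha'0 ha1 hb0 hb1)
    have hval : (1 - a) * (1 - b) - (1 - a') * (1 - b) = (a' - a) * (1 - b) := by ring
    rw [hval] at this
    exact Tendsto.congr (fun n => (key n).symm) this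
  intro t
  classical
  rcases le_or_gt t 0 with ht | ht
  · -- the statistic is a.s. positive, so the event is empty
    have he : (fun n => ((P n) {ω | -2 * (Real.log (1 - G1 (A n ω)) + Real.log (1 - G2 (B n ω)))
        ≤ t}).toReal) = fun _ => 0 := by
      funext n
      have hemp : {ω | -2 * (Real.log (1 - G1 (A n ω)) + Real.log (1 - G2 (B n ω))) ≤ t}
          = (∅ : Set (Ωs n)) := by
        ext ω
        simp only [Set.mem_setOf_eq, Set.mem_empty_iff_false, iff_false, not_le]
        have h1 : Real.log (1 - G1 (A n ω)) < 0 := Real.log_neg (hX0 n ω) (hX1 n ω)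
        have h2 : Real.log (1 - G2 (B n ω)) < 0 := Real.log_neg (hY0 n ω) (hY1 n ω)
        linarith
      rw [hemp]; simp
    rw [he, chisq4CDF, if_pos ht]
    exact tendsto_const_nhds
  · -- main case t > 0
    set c := Real.exp (-t / 2) with hcdef
    have hc0 : 0 < c := Real.exp_pos _
    have hc1 : c < 1 := Real.exp_lt_one_iff.mpr (by linarith)
    have hEeq : ∀ n, {ω | -2 * (Real.log (1 - G1 (A n ω)) + Real.log (1 - G2 (B n ω))) ≤ t}
        = {ω | c ≤ X n ω * Y n ω} := by
      intro n; ext ω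
      simp only [Set.mem_setOf_eq]
      have hxy : 0 < X n ω * Y n ω := mul_pos (hX0 n ω) (hY0 n ω)
      have hlog : Real.log (1 - G1 (A n ω)) + Real.log (1 - G2 (B n ω))
          = Real.log (X n ω * Y n ω) :=
        (Real.log_mul (ne_of_gt (hX0 n ω)) (ne_of_gt (hY0 n ω))).symm
      rw [hlog]
      constructor
      · intro h
        exact (Real.le_log_iff_exp_le hxy).mp (by linarith)
      · intro h
        have := (Real.le_log_iff_exp_le hxy).mpr h
        linarith
    have hI : chisq4CDF t = (1 - c) - (t / 2) * c := by
      rw [chisq4CDF, if_neg (not_le.mpr ht), hcdef]; ring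
    -- geometric mesh
    set qf : ℕ → ℝ := fun k => Real.exp (-t / (2 * k)) with hqdef
    have hq0 : ∀ k, 0 < qf k := fun k => Real.exp_pos _
    have hq1 : ∀ k : ℕ, 1 ≤ k → qf k < 1 := by
      intro k hk
      have hk' : (1:ℝ) ≤ (k:ℝ) := by exact_mod_cast hk
      exact Real.exp_lt_one_iff.mpr (div_neg_of_neg_of_pos (by linarith) (by linarith))
    have hqk : ∀ k : ℕ, 1 ≤ k → qf k ^ k = c := by
      intro k hk
      have hk' : (k:ℝ) ≠ 0 := Nat.cast_ne_zero.mpr (by omega)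
      rw [hqdef, hcdef]
      simp only
      rw [← Real.exp_nat_mul]
      congr 1
      field_simp
    -- lower strips
    have hLow : ∀ k : ℕ, 1 ≤ k →
        Tendsto (fun n => ((P n) (⋃ i ∈ Finset.range k,
            {ω | (qf k ^ (i+1) ≤ X n ω ∧ X n ω < qf k ^ i) ∧ qf k ^ (k-1-i) ≤ Y n ω})).toReal)
          atTop (𝓝 (∑ i ∈ Finset.range k,
            (qf k ^ i - qf k ^ (i+1)) * (1 - qf k ^ (k-1-i)))) := by
      intro k hk
      have hkey : ∀ (n : ℕ) (i j : ℕ), i < j → Disjoint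
          {ω : Ωs n | (qf k ^ (i+1) ≤ X n ω ∧ X n ω < qf k ^ i) ∧ qf k ^ (k-1-i) ≤ Y n ω}
          {ω : Ωs n | (qf k ^ (j+1) ≤ X n ω ∧ X n ω < qf k ^ j) ∧ qf k ^ (k-1-j) ≤ Y n ω} := by
        intro n i j hij
        rw [Set.disjoint_left]
        rintro ω ⟨⟨h1, _⟩, _⟩ ⟨⟨_, h4⟩, _⟩
        have : qf k ^ j ≤ qf k ^ (i+1) :=
          pow_le_pow_of_le_one (hq0 k).le (hq1 k hk).le hij
        linarith
      have heq : ∀ n, ((P n) (⋃ i ∈ Finset.range k,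
          {ω | (qf k ^ (i+1) ≤ X n ω ∧ X n ω < qf k ^ i) ∧ qf k ^ (k-1-i) ≤ Y n ω})).toReal
          = ∑ i ∈ Finset.range k, ((P n)
            {ω | (qf k ^ (i+1) ≤ X n ω ∧ X n ω < qf k ^ i) ∧ qf k ^ (k-1-i) ≤ Y n ω}).toReal := by
        intro n
        haveI := hP n
        rw [measure_biUnion_finset ?_ ?_]
        · exact ENNReal.toReal_sum (fun i _ => measure_ne_top _ _)
        · intro i _ j _ hij
          rcases hij.lt_or_gt with h | h
          · exact hkey n i j h
          · exact (hkey n j i h).symm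
        · intro i _
          exact (((measurableSet_le measurable_const (hmX n)).inter
            (measurableSet_lt (hmX n) measurable_const)).inter
            (measurableSet_le measurable_const (hmY n)))
      refine Tendsto.congr (fun n => (heq n).symm) ?_
      refine tendsto_finset_sum _ (fun i hi => ?_)
      exact hstrip (qf k ^ (i+1)) (qf k ^ i) (qf k ^ (k-1-i))
        (pow_pos (hq0 k) _)
        (pow_le_pow_of_le_one (hq0 k).le (hq1 k hk).le (Nat.le_succ i))
        (pow_le_one₀ (hq0 k).le (hq1 k hk).le)
        (pow_pos (hq0 k) _)
        (pow_le_one₀ (hq0 k).le (hq1 k hk).le)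
    -- upper strips
    have hUp : ∀ k : ℕ, 1 ≤ k →
        Tendsto (fun n => ((P n) (⋃ i ∈ Finset.range k,
            {ω | (qf k ^ (i+1) ≤ X n ω ∧ X n ω < qf k ^ i) ∧ qf k ^ (k-i) ≤ Y n ω})).toReal)
          atTop (𝓝 (∑ i ∈ Finset.range k,
            (qf k ^ i - qf k ^ (i+1)) * (1 - qf k ^ (k-i)))) := by
      intro k hk
      have hkey : ∀ (n : ℕ) (i j : ℕ), i < j → Disjoint
          {ω : Ωs n | (qf k ^ (i+1) ≤ X n ω ∧ X n ω < qf k ^ i) ∧ qf k ^ (k-i) ≤ Y n ω}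
          {ω : Ωs n | (qf k ^ (j+1) ≤ X n ω ∧ X n ω < qf k ^ j) ∧ qf k ^ (k-j) ≤ Y n ω} := by
        intro n i j hij
        rw [Set.disjoint_left]
        rintro ω ⟨⟨h1, _⟩, _⟩ ⟨⟨_, h4⟩, _⟩
        have : qf k ^ j ≤ qf k ^ (i+1) :=
          pow_le_pow_of_le_one (hq0 k).le (hq1 k hk).le hij
        linarith
      have heq : ∀ n, ((P n) (⋃ i ∈ Finset.range k,
          {ω | (qf k ^ (i+1) ≤ X n ω ∧ X n ω < qf k ^ i) ∧ qf k ^ (k-i) ≤ Y n ω})).toReal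
          = ∑ i ∈ Finset.range k, ((P n)
            {ω | (qf k ^ (i+1) ≤ X n ω ∧ X n ω < qf k ^ i) ∧ qf k ^ (k-i) ≤ Y n ω}).toReal := by
        intro n
        haveI := hP n
        rw [measure_biUnion_finset ?_ ?_]
        · exact ENNReal.toReal_sum (fun i _ => measure_ne_top _ _)
        · intro i _ j _ hij
          rcases hij.lt_or_gt with h | h
          · exact hkey n i j h
          · exact (hkey n j i h).symm
        · intro i _
          exact (((measurableSet_le measurable_const (hmX n)).inter
            (measurableSet_lt (hmX n) measurable_const)).inter
            (measurableSet_le measurable_const (hmY n)))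
      refine Tendsto.congr (fun n => (heq n).symm) ?_
      refine tendsto_finset_sum _ (fun i hi => ?_)
      exact hstrip (qf k ^ (i+1)) (qf k ^ i) (qf k ^ (k-i))
        (pow_pos (hq0 k) _)
        (pow_le_pow_of_le_one (hq0 k).le (hq1 k hk).le (Nat.le_succ i))
        (pow_le_one₀ (hq0 k).le (hq1 k hk).le)
        (pow_pos (hq0 k) _)
        (pow_le_one₀ (hq0 k).le (hq1 k hk).le)
    -- closed forms for the sums
    have hSLsum : ∀ k : ℕ, 1 ≤ k →
        (∑ i ∈ Finset.range k, (qf k ^ i - qf k ^ (i+1)) * (1 - qf k ^ (k-1-i)))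
        = (1 - c) - ((k:ℝ) * (1 - qf k)) * qf k ^ (k-1) := by
      intro k hk
      have hterm : ∀ i ∈ Finset.range k,
          (qf k ^ i - qf k ^ (i+1)) * (1 - qf k ^ (k-1-i))
          = (qf k ^ i - qf k ^ (i+1)) - (qf k ^ (k-1) - qf k ^ k) := by
        intro i hi
        have hik : i < k := Finset.mem_range.mp hi
        have e1 : qf k ^ i * qf k ^ (k-1-i) = qf k ^ (k-1) := by
          rw [← pow_add]; congr 1; omega
        have e2 : qf k ^ (i+1) * qf k ^ (k-1-i) = qf k ^ k := by
          rw [← pow_add]; congr 1; omega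
        have expand : (qf k ^ i - qf k ^ (i+1)) * (1 - qf k ^ (k-1-i))
            = (qf k ^ i - qf k ^ (i+1))
              - (qf k ^ i * qf k ^ (k-1-i) - qf k ^ (i+1) * qf k ^ (k-1-i)) := by ring
        rw [expand, e1, e2]
      rw [Finset.sum_congr rfl hterm, Finset.sum_sub_distrib,
        Finset.sum_range_sub' (fun i => qf k ^ i) k, Finset.sum_const, Finset.card_range,
        nsmul_eq_mul, pow_zero, hqk k hk]
      have hpow : qf k ^ k = qf k ^ (k-1) * qf k := by
        rw [← pow_succ]; congr 1; omega
      rw [hqk k hk] at hpow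
      rw [hpow]
      ring
    have hSUsum : ∀ k : ℕ, 1 ≤ k →
        (∑ i ∈ Finset.range k, (qf k ^ i - qf k ^ (i+1)) * (1 - qf k ^ (k-i)))
        = (1 - c) - ((k:ℝ) * (1 - qf k)) * c := by
      intro k hk
      have hterm : ∀ i ∈ Finset.range k,
          (qf k ^ i - qf k ^ (i+1)) * (1 - qf k ^ (k-i))
          = (qf k ^ i - qf k ^ (i+1)) - (qf k ^ k - qf k ^ (k+1)) := by
        intro i hi
        have hik : i < k := Finset.mem_range.mp hi
        have e1 : qf k ^ i * qf k ^ (k-i) = qf k ^ k := by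
          rw [← pow_add]; congr 1; omega
        have e2 : qf k ^ (i+1) * qf k ^ (k-i) = qf k ^ (k+1) := by
          rw [← pow_add]; congr 1; omega
        have expand : (qf k ^ i - qf k ^ (i+1)) * (1 - qf k ^ (k-i))
            = (qf k ^ i - qf k ^ (i+1))
              - (qf k ^ i * qf k ^ (k-i) - qf k ^ (i+1) * qf k ^ (k-i)) := by ring
        rw [expand, e1, e2]
      rw [Finset.sum_congr rfl hterm, Finset.sum_sub_distrib,
        Finset.sum_range_sub' (fun i => qf k ^ i) k, Finset.sum_const, Finset.card_range,
        nsmul_eq_mul, pow_zero, hqk k hk]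
      have hpow : qf k ^ (k+1) = qf k ^ k * qf k := by rw [← pow_succ]
      rw [hqk k hk] at hpow
      rw [hpow]
      ring
    -- inclusions
    have hsub1 : ∀ k : ℕ, 1 ≤ k → ∀ n,
        (⋃ i ∈ Finset.range k,
            {ω | (qf k ^ (i+1) ≤ X n ω ∧ X n ω < qf k ^ i) ∧ qf k ^ (k-1-i) ≤ Y n ω})
          ⊆ {ω | c ≤ X n ω * Y n ω} := by
      intro k hk n ω hω
      obtain ⟨i, hi, ⟨⟨h1, _⟩, h3⟩⟩ := Set.mem_iUnion₂.mp hω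
      have hik : i < k := Finset.mem_range.mp hi
      have e : qf k ^ (i+1) * qf k ^ (k-1-i) = c := by
        rw [← pow_add, show i + 1 + (k-1-i) = k by omega]
        exact hqk k hk
      have : qf k ^ (i+1) * qf k ^ (k-1-i) ≤ X n ω * Y n ω :=
        mul_le_mul h1 h3 (pow_pos (hq0 k) _).le (hX0 n ω).le
      rw [e] at this
      exact this
    have hsub2 : ∀ k : ℕ, 1 ≤ k → ∀ n,
        {ω | c ≤ X n ω * Y n ω} ⊆ (⋃ i ∈ Finset.range k,
            {ω | (qf k ^ (i+1) ≤ X n ω ∧ X n ω < qf k ^ i) ∧ qf k ^ (k-i) ≤ Y n ω}) := by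
      intro k hk n ω hω
      have hω' : c ≤ X n ω * Y n ω := hω
      have hXc : c ≤ X n ω :=
        le_trans hω' (mul_le_of_le_one_right (hX0 n ω).le (hY1 n ω).le)
      have hex : ∃ m, qf k ^ m ≤ X n ω := ⟨k, by rw [hqk k hk]; exact hXc⟩
      have hj : qf k ^ (Nat.find hex) ≤ X n ω := Nat.find_spec hex
      have hj0 : Nat.find hex ≠ 0 := by
        intro h
        rw [h, pow_zero] at hj
        exact absurd hj (not_le.mpr (hX1 n ω))
      have hjk : Nat.find hex ≤ k := Nat.find_le (by rw [hqk k hk]; exact hXc)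
      set i := Nat.find hex - 1 with hidef
      have hik : i < k := by omega
      have hi1 : qf k ^ (i+1) ≤ X n ω := by
        rw [show i + 1 = Nat.find hex by omega]
        exact hj
      have hi2 : X n ω < qf k ^ i := by
        by_contra hcon
        push_neg at hcon
        exact Nat.find_min hex (show i < Nat.find hex by omega) hcon
      have hYb : qf k ^ (k - i) ≤ Y n ω := by
        have hpos : (0:ℝ) < qf k ^ i := pow_pos (hq0 k) i
        have e : qf k ^ i * qf k ^ (k-i) = c := by
          rw [← pow_add, show i + (k-i) = k by omega]
          exact hqk k hk
        have h2 : qf k ^ i * qf k ^ (k-i) ≤ X n ω * Y n ω := by rw [e]; exact hω'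
        have h3 : X n ω * Y n ω < qf k ^ i * Y n ω :=
          mul_lt_mul_of_pos_right hi2 (hY0 n ω)
        exact ((mul_lt_mul_iff_right₀ hpos).mp (lt_of_le_of_lt h2 h3)).le
      exact Set.mem_iUnion₂.mpr ⟨i, Finset.mem_range.mpr hik, ⟨⟨hi1, hi2⟩, hYb⟩⟩
    -- limits of the closed forms as k → ∞
    have hy0 : Tendsto (fun k : ℕ => -t / (2 * (k:ℝ))) atTop (𝓝 0) := by
      have : (fun k : ℕ => -t / (2 * (k:ℝ))) = fun k : ℕ => (-t/2) / (k:ℝ) := by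
        funext k; rw [div_div]
      rw [this]
      exact tendsto_const_div_atTop_nhds_zero_nat _
    have hqto1 : Tendsto qf atTop (𝓝 1) := by
      have := (Real.continuous_exp.tendsto 0).comp hy0
      simpa [hqdef, Function.comp_def] using this
    have hslope : Tendsto (fun h : ℝ => (Real.exp h - 1) / h) (𝓝[≠] (0:ℝ)) (𝓝 1) := by
      have h1 := hasDerivAt_iff_tendsto_slope.mp (Real.hasDerivAt_exp 0)
      rw [Real.exp_zero] at h1
      refine h1.congr (fun h => ?_)
      rw [slope_def_field, Real.exp_zero, sub_zero]
    have hyne : ∀ᶠ k : ℕ in atTop, -t / (2 * (k:ℝ)) ∈ ({0}ᶜ : Set ℝ) := by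
      filter_upwards [eventually_ge_atTop 1] with k hk
      have hk' : (1:ℝ) ≤ (k:ℝ) := by exact_mod_cast hk
      have : -t / (2 * (k:ℝ)) < 0 := div_neg_of_neg_of_pos (by linarith) (by linarith)
      simpa using this.ne
    have hcomp : Tendsto (fun k : ℕ =>
        (Real.exp (-t / (2 * (k:ℝ))) - 1) / (-t / (2 * (k:ℝ)))) atTop (𝓝 1) := by
      have := hslope.comp (tendsto_nhdsWithin_iff.mpr ⟨hy0, hyne⟩)
      simpa [Function.comp_def] using this
    have hk1 : Tendsto (fun k : ℕ => (k:ℝ) * (1 - qf k)) atTop (𝓝 (t/2)) := by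
      have hmul := hcomp.mul_const (t/2)
      rw [one_mul] at hmul
      refine hmul.congr' ?_
      filter_upwards [eventually_ge_atTop 1] with k hk
      have hk0 : (k:ℝ) ≠ 0 := Nat.cast_ne_zero.mpr (by omega)
      have hyk : -t / (2 * (k:ℝ)) ≠ 0 := by
        have hk' : (1:ℝ) ≤ (k:ℝ) := by exact_mod_cast hk
        exact (div_neg_of_neg_of_pos (by linarith) (by linarith)).ne
      rw [hqdef]
      simp only
      field_simp
      ring
    have hqkm1 : Tendsto (fun k : ℕ => qf k ^ (k-1)) atTop (𝓝 c) := by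
      have hd : Tendsto (fun k : ℕ => c / qf k) atTop (𝓝 c) := by
        have h0 := Tendsto.div (tendsto_const_nhds : Tendsto (fun _ : ℕ => c) atTop (𝓝 c))
          hqto1 one_ne_zero
        simpa [Pi.div_def] using h0
      refine hd.congr' ?_
      filter_upwards [eventually_ge_atTop 1] with k hk
      have hpow : qf k ^ (k-1) * qf k = qf k ^ k := by
        rw [← pow_succ]; congr 1; omega
      rw [hqk k hk] at hpow
      field_simp [(hq0 k).ne']
      linarith [hpow]
    have hSLlim : Tendsto (fun k : ℕ => (1 - c) - ((k:ℝ) * (1 - qf k)) * qf k ^ (k-1))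
        atTop (𝓝 ((1 - c) - (t/2) * c)) := tendsto_const_nhds.sub (hk1.mul hqkm1)
    have hSUlim : Tendsto (fun k : ℕ => (1 - c) - ((k:ℝ) * (1 - qf k)) * c)
        atTop (𝓝 ((1 - c) - (t/2) * c)) := tendsto_const_nhds.sub (hk1.mul_const c)
    -- final assembly
    rw [hI, Metric.tendsto_atTop]
    intro ε hε
    have hε2 : 0 < ε / 2 := by linarith
    obtain ⟨K1, hK1⟩ := Metric.tendsto_atTop.mp hSLlim (ε/2) hε2
    obtain ⟨K2, hK2⟩ := Metric.tendsto_atTop.mp hSUlim (ε/2) hε2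
    set k := max (max K1 K2) 1 with hkdef
    have hk : 1 ≤ k := le_max_right _ _
    have hdl : dist ((1 - c) - ((k:ℝ) * (1 - qf k)) * qf k ^ (k-1)) ((1 - c) - (t/2) * c)
        < ε/2 := hK1 k (le_trans (le_max_left _ _) (le_max_left _ _))
    have hdu : dist ((1 - c) - ((k:ℝ) * (1 - qf k)) * c) ((1 - c) - (t/2) * c)
        < ε/2 := hK2 k (le_trans (le_max_right _ _) (le_max_left _ _))
    have hLowk := hLow k hk
    have hUpk := hUp k hk
    rw [hSLsum k hk] at hLowk
    rw [hSUsum k hk] at hUpk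
    obtain ⟨N1, hN1⟩ := Metric.tendsto_atTop.mp hLowk (ε/2) hε2
    obtain ⟨N2, hN2⟩ := Metric.tendsto_atTop.mp hUpk (ε/2) hε2
    refine ⟨max N1 N2, fun n hn => ?_⟩
    haveI := hP n
    have h1 := hN1 n (le_trans (le_max_left _ _) hn)
    have h2 := hN2 n (le_trans (le_max_right _ _) hn)
    have hm1 : ((P n) (⋃ i ∈ Finset.range k,
        {ω | (qf k ^ (i+1) ≤ X n ω ∧ X n ω < qf k ^ i) ∧ qf k ^ (k-1-i) ≤ Y n ω})).toReal
        ≤ ((P n) {ω | c ≤ X n ω * Y n ω}).toReal :=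
      ENNReal.toReal_mono (measure_ne_top _ _) (measure_mono (hsub1 k hk n))
    have hm2 : ((P n) {ω | c ≤ X n ω * Y n ω}).toReal
        ≤ ((P n) (⋃ i ∈ Finset.range k,
        {ω | (qf k ^ (i+1) ≤ X n ω ∧ X n ω < qf k ^ i) ∧ qf k ^ (k-i) ≤ Y n ω})).toReal :=
      ENNReal.toReal_mono (measure_ne_top _ _) (measure_mono (hsub2 k hk n))
    rw [hEeq n]
    rw [Real.dist_eq] at h1 h2 hdl hdu ⊢
    rw [abs_lt] at h1 h2 hdl hdu
    rw [abs_lt]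
    constructor <;> linarith
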